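/- The function I₃ = 1/u₁ + ln(u₂/(2uu₂ - u₁²)) is a first integral of the vector field Z = ∂_x + u₁∂_u + u₂∂_{u₁} + (u₂²(u₁² - 2uu₂)/u₁⁴)∂_{u₂} on the region where u₁ ≠ 0 and u₂/(2uu₂ - u₁²) > 0; that is, Z(I₃) = 0. -/

import Mathlib

/-!
Write `D = 2uu₂ - u₁²`, so that `dI₃ = -du₁/u₁² + du₂/u₂ - dD/D`. Along `Z`,
`Z(D) = 2u·u₃ = -2u u₂² D / u₁⁴`, hence `Z(ln D) = -2u u₂²/u₁⁴`, while `Z(1/u₁) = -u₂/u₁²` and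
`Z(ln u₂) = u₃/u₂ = u₂(u₁² - 2uu₂)/u₁⁴`; the three terms cancel.
-/

namespace Ex1Int

/-- The restricted total derivative of the ODE `u₃ = u₂²(u₁² - 2uu₂)/u₁⁴`, as the
vector field `Z = ∂_x + u₁∂_u + u₂∂_{u₁} + (u₂²(u₁² - 2uu₂)/u₁⁴)∂_{u₂}` on coordinates
`p = (x, u, u₁, u₂)`. -/
noncomputable def Z (p : Fin 4 → ℝ) : Fin 4 → ℝ :=
  ![1, p 2, p 3, (p 3) ^ 2 * ((p 2) ^ 2 - 2 * p 1 * p 3) / (p 2) ^ 4]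

/-- `I₃ = 1/u₁ + ln(u₂/(2uu₂ - u₁²))`. -/
noncomputable def I₃ (p : Fin 4 → ℝ) : ℝ :=
  1 / p 2 + Real.log (p 3 / (2 * p 1 * p 3 - (p 2) ^ 2))

end Ex1Int

namespace Ex1Int

variable {p : Fin 4 → ℝ}

theorem fderiv_I₃_apply (hu₁ : p 2 ≠ 0) (hu₂ : p 3 ≠ 0) (hD : 2 * p 1 * p 3 - p 2 ^ 2 ≠ 0)
    (v : Fin 4 → ℝ) :
    fderiv ℝ I₃ p v = -v 2 / p 2 ^ 2 + v 3 / p 3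
      - (2 * v 1 * p 3 + 2 * p 1 * v 3 - 2 * p 2 * v 2) / (2 * p 1 * p 3 - p 2 ^ 2) := by
  have hcoord (i : Fin 4) := hasFDerivAt_apply (𝕜 := ℝ) i p
  have hDinv := (hasDerivAt_inv hD).comp_hasFDerivAt
    (f := fun q : Fin 4 → ℝ => 2 * q 1 * q 3 - q 2 ^ 2) p <|
    (((hcoord 1).const_mul 2).mul (hcoord 3)).sub ((hcoord 2).pow 2)
  have hI := (((hasDerivAt_inv hu₁).comp_hasFDerivAt p (hcoord 2)).add
    (((hcoord 3).mul hDinv).log (div_ne_zero hu₂ hD))).congr_of_eventuallyEq (f₁ := I₃)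
    (.of_forall fun q => by simp [I₃, div_eq_mul_inv])
  rw [hI.fderiv]
  simp only [Fin.isValue, neg_smul, Pi.mul_apply, Function.comp_apply, mul_inv_rev, inv_inv,
    Nat.add_one_sub_one, pow_one, nsmul_eq_mul, Nat.cast_ofNat, smul_neg, smul_add, add_apply,
    neg_apply, smul_apply, ContinuousLinearMap.proj_apply, smul_eq_mul, sub_apply]
  field_simp
  ring

end Ex1Int

open Ex1Int in
/-- `I₃ = 1/u₁ + ln(u₂/(2uu₂ - u₁²))` is a first integral of `Z` on the region where
`u₁ ≠ 0` and `u₂/(2uu₂ - u₁²) > 0`: `Z(I₃) = 0`. -/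
theorem stmt_14 (p : Fin 4 → ℝ) (hu₁ : p 2 ≠ 0)
    (harg : p 3 / (2 * p 1 * p 3 - (p 2) ^ 2) > 0) :
    fderiv ℝ I₃ p (Z p) = 0 := by
  obtain ⟨hu₂, hD⟩ := div_ne_zero_iff.mp harg.ne'
  have hZlogD : (2 * Z p 1 * p 3 + 2 * p 1 * Z p 3 - 2 * p 2 * Z p 2)
      / (2 * p 1 * p 3 - p 2 ^ 2) = -2 * p 1 * p 3 ^ 2 / p 2 ^ 4 := by
    rw [div_eq_iff hD]
    simp only [Z, Matrix.cons_val]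
    field_simp
    ring
  rw [fderiv_I₃_apply hu₁ hu₂ hD, hZlogD]
  simp only [Z, Matrix.cons_val]
  field_simp
  ring
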